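/- arXiv:2409.00431 — 4 statements merged into one kernel-verified Lean document; each statement's English description precedes it below -/
import Mathlib

section
/- Let $c > 0$ and let $x > 1$ be real. Then $\frac{1}{2\pi i}\int_{c-i\infty}^{c+i\infty} \frac{x^s}{s(s+2)(s+3)(s+4)}\,ds = \frac{1}{24} - \frac{1}{4x^2} + \frac{1}{3x^3} - \frac{1}{8x^4}$. -/
/-!
By partial fractions, for `Re s > 0`,
`1 / (s (s + 2) (s + 3) (s + 4)) = 1 / (24 s) - 1 / (4 (s + 2)) + 1 / (3 (s + 3)) - 1 / (8 (s + 4))`,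
which is the Mellin transform of `f(y) = 1/24 - y²/4 + y³/3 - y⁴/8` on `(0, 1]`, `f = 0` on
`(1, ∞)`. Since `x ^ s = (1/x) ^ (-s)`, the integral is the inverse Mellin transform of `f` at
`1/x`. The transform is `O(1/t²)` on the line `Re s = c` and `f` is continuous at `1/x ∈ (0, 1)`,
so Mellin inversion gives `f(1/x)`.
-/

open Complex Filter Real MeasureTheory Set

theorem hasMellin_finsetSum {ι E : Type*} [NormedAddCommGroup E] [NormedSpace ℂ E]
    (u : Finset ι) {f : ι → ℝ → E} {s : ℂ} (hf : ∀ i ∈ u, MellinConvergent (f i) s) :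
    HasMellin (fun t => ∑ i ∈ u, f i t) s (∑ i ∈ u, mellin (f i) s) := by
  constructor
  · simpa only [MellinConvergent, IntegrableOn, Finset.smul_sum] using integrable_finsetSum u hf
  · simpa only [mellin, Finset.smul_sum] using integral_finsetSum u hf

theorem hasMellin_sum_cpow_Ioc {ι : Type*} (u : Finset ι) (a β : ι → ℂ) {s : ℂ}
    (hs : ∀ i ∈ u, 0 < s.re + (β i).re) :
    HasMellin ((Ioc 0 1).indicator fun t : ℝ => ∑ i ∈ u, a i * (t : ℂ) ^ β i) s
      (∑ i ∈ u, a i / (s + β i)) := by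
  have hterm : ∀ i ∈ u, HasMellin
      (fun t => a i • (Ioc 0 1).indicator (fun t : ℝ => (t : ℂ) ^ β i) t) s (a i / (s + β i)) :=
    fun i hi => by
      obtain ⟨hconv, hval⟩ := hasMellin_cpow_Ioc (β i) (hs i hi)
      simpa [hval, div_eq_mul_inv] using hasMellin_const_smul hconv (a i)
  have hsum := hasMellin_finsetSum u fun i hi => (hterm i hi).1
  rw [Finset.sum_congr rfl fun i hi => (hterm i hi).2] at hsum
  convert hsum using 2 with t
  by_cases ht : t ∈ Ioc 0 1 <;> simp [ht]

theorem ofReal_inv_cpow_neg {x : ℝ} (hx : 0 < x) (s : ℂ) :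
    ((x⁻¹ : ℝ) : ℂ) ^ (-s) = (x : ℂ) ^ s := by
  rw [ofReal_inv, inv_cpow _ _ (by simp [arg_ofReal_of_nonneg hx.le, pi_ne_zero.symm]), cpow_neg,
    inv_inv]

theorem integral_cpow_mul_mellin_eq {f : ℝ → ℂ} {σ x : ℝ} (hx : 0 < x)
    (hf : MellinConvergent f σ) (hFf : VerticalIntegrable (mellin f) σ)
    (hfx : ContinuousAt f x⁻¹) :
    1 / (2 * π) * ∫ t : ℝ, (x : ℂ) ^ (σ + t * I) * mellin f (σ + t * I) = f x⁻¹ := by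
  have := mellinInv_mellin_eq σ f (inv_pos.mpr hx) hf hFf hfx
  simp only [mellinInv, ofReal_inv_cpow_neg hx, smul_eq_mul] at this
  exact_mod_cast this

theorem tendsto_intervalIntegral_cpow_mul_mellin {f : ℝ → ℂ} {σ x : ℝ} (hx : 0 < x)
    (hf : MellinConvergent f σ) (hFf : VerticalIntegrable (mellin f) σ)
    (hfx : ContinuousAt f x⁻¹) :
    Tendsto (fun T : ℝ => 1 / (2 * π) *
        ∫ t in (-T)..T, (x : ℂ) ^ (σ + t * I) * mellin f (σ + t * I)) atTop (nhds (f x⁻¹)) := by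
  have hint : Integrable fun t : ℝ => (x : ℂ) ^ (σ + t * I) * mellin f (σ + t * I) := by
    refine hFf.bdd_mul (c := x ^ σ) (Continuous.aestronglyMeasurable ?_) (.of_forall fun t => ?_)
    · exact Continuous.const_cpow (by fun_prop) (.inl (ofReal_ne_zero.mpr hx.ne'))
    · simp [norm_cpow_eq_rpow_re_of_pos hx]
  rw [← integral_cpow_mul_mellin_eq hx hf hFf hfx]
  exact (intervalIntegral_tendsto_integral hint tendsto_neg_atTop_atBot tendsto_id).const_mul _

noncomputable def truncatedQuartic : ℝ → ℂ :=
  (Ioc 0 1).indicator fun y => 1 / 24 - y ^ 2 / 4 + y ^ 3 / 3 - y ^ 4 / 8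

theorem hasMellin_truncatedQuartic {s : ℂ} (hs : 0 < s.re) :
    HasMellin truncatedQuartic s (s * (s + 2) * (s + 3) * (s + 4))⁻¹ := by
  have h := hasMellin_sum_cpow_Ioc Finset.univ ![1 / 24, -1 / 4, 1 / 3, -1 / 8] ![0, 2, 3, 4]
    (s := s) fun i _ => by fin_cases i <;> simp <;> linarith
  have hne : ∀ a : ℝ, 0 ≤ a → s + a ≠ 0 := fun a ha =>
    ne_of_apply_ne re (by simpa using (add_pos_of_pos_of_nonneg hs ha).ne')
  have h0 : s ≠ 0 := by simpa using hne 0 le_rfl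
  have h2 : s + 2 ≠ 0 := by exact_mod_cast hne 2 zero_le_two
  have h3 : s + 3 ≠ 0 := by exact_mod_cast hne 3 zero_le_three
  have h4 : s + 4 ≠ 0 := by exact_mod_cast hne 4 zero_le_four
  convert h using 1
  · funext y
    by_cases hy : y ∈ Ioc 0 1 <;> simp [truncatedQuartic, hy, Fin.sum_univ_four]
    ring
  · simp only [Fin.sum_univ_four, Fin.isValue, Matrix.cons_val_zero, Matrix.cons_val_one,
      Matrix.cons_val, add_zero]
    field_simp
    ring

theorem continuousAt_truncatedQuartic {y : ℝ} (hy : y ∈ Ioo 0 1) :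
    ContinuousAt truncatedQuartic y := by
  have h : (fun y : ℝ => (1 / 24 - y ^ 2 / 4 + y ^ 3 / 3 - y ^ 4 / 8 : ℂ))
      =ᶠ[nhds y] truncatedQuartic :=
    eventuallyEq_of_mem (Ioo_mem_nhds hy.1 hy.2) fun z hz => by
      simp [truncatedQuartic, Ioo_subset_Ioc_self hz]
  exact ContinuousAt.congr (by fun_prop) h

theorem sqrt_one_add_sq_im_le_norm {z : ℂ} (hz : 1 ≤ z.re) : √(1 + z.im ^ 2) ≤ ‖z‖ := by
  rw [Complex.norm_def, normSq_apply]
  exact Real.sqrt_le_sqrt (by nlinarith)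

theorem verticalIntegrable_inv_quartic {c : ℝ} (hc : 0 < c) :
    VerticalIntegrable (fun s : ℂ => (s * (s + 2) * (s + 3) * (s + 4))⁻¹) c := by
  refine (integrable_inv_one_add_sq.const_mul (2 * c)⁻¹).mono'
    (Measurable.aestronglyMeasurable (by fun_prop)) (.of_forall fun t => ?_)
  have hre : (c + t * I : ℂ).re = c := by simp
  have him : (c + t * I : ℂ).im = t := by simp
  generalize (c + t * I : ℂ) = s at hre him
  have h0 : c ≤ ‖s‖ := hre ▸ re_le_norm s
  have h2 : 2 ≤ ‖s + 2‖ := le_trans (by simp [hre]; linarith) (re_le_norm (s + 2))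
  have h3 : √(1 + t ^ 2) ≤ ‖s + 3‖ := by
    simpa [him] using sqrt_one_add_sq_im_le_norm (z := s + 3) (by simp [hre]; linarith)
  have h4 : √(1 + t ^ 2) ≤ ‖s + 4‖ := by
    simpa [him] using sqrt_one_add_sq_im_le_norm (z := s + 4) (by simp [hre]; linarith)
  have hP : 2 * c * (1 + t ^ 2) ≤ ‖s * (s + 2) * (s + 3) * (s + 4)‖ := by
    rw [norm_mul, norm_mul, norm_mul, ← Real.mul_self_sqrt (by positivity : (0:ℝ) ≤ 1 + t ^ 2)]
    calc 2 * c * (√(1 + t ^ 2) * √(1 + t ^ 2)) = c * 2 * √(1 + t ^ 2) * √(1 + t ^ 2) := by ring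
      _ ≤ ‖s‖ * ‖s + 2‖ * ‖s + 3‖ * ‖s + 4‖ := by gcongr
  rw [norm_inv, ← mul_inv]
  exact inv_anti₀ (by positivity) (by linarith)

theorem stmt_3 (c : ℝ) (hc : 0 < c) (x : ℝ) (hx : 1 < x) :
    Tendsto (fun T : ℝ => (1 / (2 * Real.pi)) *
        ∫ t in (-T)..T, (x : ℂ) ^ ((c : ℂ) + t * Complex.I) /
          (((c : ℂ) + t * Complex.I) * ((c : ℂ) + t * Complex.I + 2) *
            ((c : ℂ) + t * Complex.I + 3) * ((c : ℂ) + t * Complex.I + 4)))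
      atTop
      (nhds ((1 / 24 : ℂ) - 1 / (4 * (x : ℂ) ^ 2) + 1 / (3 * (x : ℂ) ^ 3)
        - 1 / (8 * (x : ℂ) ^ 4))) := by
  have hx0 : 0 < x := by linarith
  have hline : ∀ t : ℝ, mellin truncatedQuartic (c + t * I) =
      ((c + t * I) * (c + t * I + 2) * (c + t * I + 3) * (c + t * I + 4))⁻¹ :=
    fun t => (hasMellin_truncatedQuartic (by simpa)).2
  have hlimit := tendsto_intervalIntegral_cpow_mul_mellin hx0
    (hasMellin_truncatedQuartic (s := c) (by simpa)).1
    ((verticalIntegrable_inv_quartic hc).congr (.of_forall fun t => (hline t).symm))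
    (continuousAt_truncatedQuartic ⟨inv_pos.mpr hx0, inv_lt_one_of_one_lt₀ hx⟩)
  simp only [hline, ← div_eq_mul_inv] at hlimit
  convert hlimit using 2
  simp [truncatedQuartic, inv_le_one_of_one_le₀ hx.le, hx0]
  ring
end

section
/- Let $p$ be a prime, $r \in \mathbb{C}$, and $u \in \mathbb{C}$ with $-2 < \mathrm{Re}(u) < 2$. Set $U := p^{-u}$ and define for integers $\alpha \geq 0$: $h(\alpha) := \sum_{j=0}^{\alpha} p^{ju} + (pr - 1)\sum_{j=0}^{\alpha - 1} p^{ju} - pr \sum_{j=0}^{\alpha-2} p^{ju}$ (empty sums being $0$). Then $\sum_{\alpha=0}^\infty \frac{h(\alpha)^2}{p^{\alpha(2+u)}} = \frac{p^2 U (1 + 2r/p + r^2 U)}{p^2 U - 1}$, the series converging absolutely. -/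
/-!
Write `q = p ^ u`. The sums in `h` are geometric in `q`, and the combination defining `h` telescopes:
`h 0 = 1` and `h (n + 1) = q ^ n * (q + p r)`. Since `p ^ (n (2 + u)) = (p² q) ^ n`, the terms of
the series with `α = n + 1` form the geometric progression `(q + p r)² / (p² q) * (q / p²) ^ n`,
whose ratio has norm `p ^ (Re u - 2) < 1`. Summing it and adding the term `1` at `α = 0` gives the
closed form.
-/

open Complex Finset

lemma sum_range_succ_succ_add_sub_one_mul_sub {R : Type*} [CommRing R] (g : ℕ → R) (c : R) (n : ℕ) :
    ∑ j ∈ range (n + 1 + 1), g j + (c - 1) * ∑ j ∈ range (n + 1), g j - c * ∑ j ∈ range n, g j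
      = g (n + 1) + c * g n := by
  simp only [sum_range_succ]
  ring

lemma cpow_nat_mul_two_add {x : ℂ} (hx : x ≠ 0) (n : ℕ) (u : ℂ) :
    x ^ ((n : ℂ) * (2 + u)) = (x ^ 2 * x ^ u) ^ n := by
  rw [cpow_nat_mul, cpow_add _ _ hx, cpow_ofNat]

lemma norm_natCast_cpow_div_sq_lt_one {p : ℕ} (hp : 1 < p) {u : ℂ} (hu : u.re < 2) :
    ‖(p : ℂ) ^ u / (p : ℂ) ^ 2‖ < 1 := by
  have hp' : (1 : ℝ) < p := by exact_mod_cast hp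
  rw [norm_div, norm_natCast_cpow_of_pos (by omega), norm_pow, norm_natCast, ← Real.rpow_two,
    div_lt_one (by positivity)]
  exact Real.rpow_lt_rpow_of_exponent_lt hp' hu

lemma hasSum_sq_div_mul_pow_of_succ {𝕜 : Type*} [NormedField 𝕜] {h : ℕ → 𝕜} {P q b : 𝕜}
    (hP : P ≠ 0) (hq : q ≠ 0) (hx : ‖q / P‖ < 1) (h0 : h 0 = 1)
    (h_succ : ∀ n, h (n + 1) = q ^ n * b) :
    HasSum (fun α ↦ h α ^ 2 / (P * q) ^ α) (1 + b ^ 2 / (P * q) * (1 - q / P)⁻¹) := by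
  have hterm_succ (n : ℕ) : h (n + 1) ^ 2 / (P * q) ^ (n + 1) = b ^ 2 / (P * q) * (q / P) ^ n := by
    rw [h_succ, div_pow, pow_succ, mul_pow, mul_pow, ← pow_mul, pow_mul']
    field_simp
    ring
  have htail : HasSum (fun n ↦ h (n + 1) ^ 2 / (P * q) ^ (n + 1))
      (b ^ 2 / (P * q) * (1 - q / P)⁻¹) := by
    simpa only [hterm_succ] using (hasSum_geometric_of_norm_lt_one hx).mul_left _
  simpa only [h0, one_pow, pow_zero, div_one]
    using htail.zero_add (f := fun α ↦ h α ^ 2 / (P * q) ^ α)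

theorem stmt_10_general (p : ℕ) (hp : p.Prime) (r u : ℂ) (hu2 : u.re < 2)
    (h : ℕ → ℂ)
    (hh : ∀ α : ℕ, h α = (∑ j ∈ Finset.range (α + 1), (p : ℂ) ^ ((j : ℂ) * u))
      + (p * r - 1) * (∑ j ∈ Finset.range α, (p : ℂ) ^ ((j : ℂ) * u))
      - p * r * (∑ j ∈ Finset.range (α - 1), (p : ℂ) ^ ((j : ℂ) * u))) :
    Summable (fun α : ℕ => (h α) ^ 2 / (p : ℂ) ^ ((α : ℂ) * (2 + u))) ∧
    ∑' α : ℕ, (h α) ^ 2 / (p : ℂ) ^ ((α : ℂ) * (2 + u))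
      = (p : ℂ) ^ 2 * (p : ℂ) ^ (-u) * (1 + 2 * r / p + r ^ 2 * (p : ℂ) ^ (-u)) /
        ((p : ℂ) ^ 2 * (p : ℂ) ^ (-u) - 1) := by
  have hp0 : (p : ℂ) ≠ 0 := Nat.cast_ne_zero.mpr hp.ne_zero
  have hq0 : (p : ℂ) ^ u ≠ 0 := cpow_ne_zero_iff.mpr (Or.inl hp0)
  have hx := norm_natCast_cpow_div_sq_lt_one hp.one_lt hu2
  rw [cpow_neg]
  simp only [cpow_nat_mul] at hh
  simp only [cpow_nat_mul_two_add hp0]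
  generalize (p : ℂ) ^ u = q at hh hq0 hx ⊢
  have hpq : (p : ℂ) ^ 2 - q ≠ 0 := fun hpq ↦ by
    rw [← sub_eq_zero.mp hpq, div_self (pow_ne_zero 2 hp0), norm_one] at hx
    exact lt_irrefl 1 hx
  have hsum := hasSum_sq_div_mul_pow_of_succ (h := h) (b := q + p * r) (pow_ne_zero 2 hp0) hq0 hx
    (by simp [hh]) fun n ↦ by
      rw [hh, Nat.add_sub_cancel, sum_range_succ_succ_add_sub_one_mul_sub (q ^ ·)]
      ring
  refine ⟨hsum.summable, hsum.tsum_eq.trans ?_⟩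
  field_simp
  ring

theorem stmt_10 (p : ℕ) (hp : p.Prime) (r u : ℂ) (hu1 : -2 < u.re) (hu2 : u.re < 2)
    (h : ℕ → ℂ)
    (hh : ∀ α : ℕ, h α = (∑ j ∈ Finset.range (α + 1), (p : ℂ) ^ ((j : ℂ) * u))
      + (p * r - 1) * (∑ j ∈ Finset.range α, (p : ℂ) ^ ((j : ℂ) * u))
      - p * r * (∑ j ∈ Finset.range (α - 1), (p : ℂ) ^ ((j : ℂ) * u))) :
    Summable (fun α : ℕ => (h α) ^ 2 / (p : ℂ) ^ ((α : ℂ) * (2 + u))) ∧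
    ∑' α : ℕ, (h α) ^ 2 / (p : ℂ) ^ ((α : ℂ) * (2 + u))
      = (p : ℂ) ^ 2 * (p : ℂ) ^ (-u) * (1 + 2 * r / p + r ^ 2 * (p : ℂ) ^ (-u)) /
        ((p : ℂ) ^ 2 * (p : ℂ) ^ (-u) - 1) :=
  stmt_10_general p hp r u hu2 h hh
end

section
/- Let $d \geq 1$, let $a \in \{0, 1\}$, and let $n, m$ be integers coprime to $d$. Then $2 \sum_{\chi} \chi(n)\overline{\chi}(m) = \sum_{k \mid d,\ n \equiv m (k)} \phi(k)\mu(d/k) + (-1)^a \sum_{k \mid d,\ n \equiv -m (k)} \phi(k)\mu(d/k)$, where the first sum on the left runs over the primitive Dirichlet characters $\chi$ modulo $d$ with $\chi(-1) = (-1)^a$. -/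
/-!
Möbius inversion over conductors. A character mod `d` factors through a divisor `k` of `d` exactly
when its conductor divides `k`, so `[χ primitive] = ∑_{k ∣ d, χ factors through k} μ(d/k)`. The
characters mod `d` factoring through `k` are the lifts of the characters mod `k`, and orthogonality
mod `k` gives `∑_ψ ψ(n) ψ̄(m) = φ(k) [n ≡ m (mod k)]`. Finally the parity condition is selected by
`2 [χ(-1) = ε] = 1 + ε χ(-1)` for `ε = ±1`, together with `χ(-1) χ(n) = χ(-n)`.
-/

open scoped Classical

open ArithmeticFunction DirichletCharacter
open scoped ArithmeticFunction.Moebius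

lemma ZMod.isUnit_intCast_of_gcd_eq_one {x : ℤ} {k : ℕ} (h : Int.gcd x k = 1) :
    IsUnit (x : ZMod k) :=
  (ZMod.coe_int_isUnit_iff_isCoprime x k).mpr
    (Int.isCoprime_iff_gcd_eq_one.mpr (by rwa [Int.gcd_comm]))

namespace ArithmeticFunction

theorem sum_divisors_moebius (n : ℕ) :
    ∑ i ∈ n.divisors, μ i = if n = 1 then 1 else 0 := by
  rw [← coe_mul_zeta_apply, moebius_mul_coe_zeta, one_apply]

theorem sum_divisors_filter_dvd_moebius_div {c d : ℕ} (hd : d ≠ 0) (hc : c ∣ d) :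
    ∑ k ∈ d.divisors with c ∣ k, μ (d / k) = if c = d then 1 else 0 := by
  rw [Finset.sum_filter, ← Nat.sum_div_divisors]
  have h : ∀ j ∈ d.divisors, (if c ∣ d / j then μ (d / (d / j)) else 0)
      = if j ∣ d / c then μ j else 0 := by
    intro j hj
    have hjd := Nat.dvd_of_mem_divisors hj
    rw [Nat.div_div_self hjd hd]
    refine if_congr ?_ rfl rfl
    rw [Nat.dvd_div_iff_mul_dvd hjd, Nat.dvd_div_iff_mul_dvd hc, mul_comm]
  rw [Finset.sum_congr rfl h, ← Finset.sum_filter,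
    Nat.divisors_filter_dvd_of_dvd hd (Nat.div_dvd_of_dvd hc), sum_divisors_moebius]
  refine if_congr ?_ rfl rfl
  rw [Nat.div_eq_iff_eq_mul_left (Nat.pos_of_dvd_of_pos hc (Nat.pos_of_ne_zero hd)) hc, one_mul,
    eq_comm]

end ArithmeticFunction

namespace DirichletCharacter

section Sums

variable {R M : Type*} [CommRing R] [IsDomain R] {d : ℕ}

theorem sum_isPrimitive_eq_sum_divisors_moebius_smul [AddCommGroup M] [NeZero d]
    (F : DirichletCharacter R d → M) :
    ∑ χ, (if χ.IsPrimitive then F χ else 0)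
      = ∑ k ∈ d.divisors, μ (d / k) • ∑ χ with χ.FactorsThrough k, F χ := by
  have hprim : ∀ χ : DirichletCharacter R d,
      (if χ.IsPrimitive then F χ else 0)
        = ∑ k ∈ d.divisors, if χ.FactorsThrough k then μ (d / k) • F χ else 0 := by
    intro χ
    have hfilter : {k ∈ d.divisors | χ.FactorsThrough k} = {k ∈ d.divisors | χ.conductor ∣ k} :=
      Finset.filter_congr fun k hk ↦
        mem_conductorSet_iff_conductor_dvd χ (Nat.dvd_of_mem_divisors hk)
    rw [← Finset.sum_filter, ← Finset.sum_smul, hfilter,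
      sum_divisors_filter_dvd_moebius_div (NeZero.ne d) χ.conductor_dvd_level, isPrimitive_def]
    split_ifs <;> simp
  simp_rw [hprim, Finset.sum_comm (s := Finset.univ), Finset.sum_filter, Finset.smul_sum]
  refine Finset.sum_congr rfl fun k _ ↦ Finset.sum_congr rfl fun χ _ ↦ ?_
  split_ifs <;> simp

theorem sum_factorsThrough_eq_sum_changeLevel [AddCommMonoid M] [NeZero d] {k : ℕ} (hk : k ∣ d)
    (F : DirichletCharacter R d → M) :
    ∑ χ with χ.FactorsThrough k, F χ = ∑ ψ : DirichletCharacter R k, F (changeLevel hk ψ) := by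
  refine (Finset.sum_bij (fun ψ _ ↦ changeLevel hk ψ) ?_ ?_ ?_ fun _ _ ↦ rfl).symm
  · exact fun ψ _ ↦ Finset.mem_filter.mpr ⟨Finset.mem_univ _, changeLevel_factorsThrough ψ hk⟩
  · exact fun _ _ _ _ h ↦ changeLevel_injective hk h
  · intro χ hχ
    obtain ⟨-, ψ, rfl⟩ := (Finset.mem_filter.mp hχ).2
    exact ⟨ψ, Finset.mem_univ _, rfl⟩

end Sums

theorem changeLevel_apply_intCast {R : Type*} [CommMonoidWithZero R] {d k : ℕ} (hk : k ∣ d)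
    (ψ : DirichletCharacter R k) {x : ℤ} (hx : IsUnit (x : ZMod d)) :
    changeLevel hk ψ x = ψ x := by
  obtain ⟨u, hu⟩ := hx
  rw [← hu, changeLevel_eq_cast_of_dvd, hu, ZMod.cast_intCast hk]

theorem sum_apply_mul_conj_apply {k : ℕ} [NeZero k] (x : ZMod k) {y : ZMod k} (hy : IsUnit y) :
    ∑ ψ : DirichletCharacter ℂ k, ψ x * starRingEnd ℂ (ψ y)
      = if x = y then (k.totient : ℂ) else 0 := by
  have hconj : ∀ ψ : DirichletCharacter ℂ k, ψ x * starRingEnd ℂ (ψ y) = ψ y⁻¹ * ψ x := by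
    obtain ⟨u, rfl⟩ := hy
    intro ψ
    rw [mul_comm, starRingEnd_apply, MulChar.star_apply', MulChar.inv_apply, Ring.inverse_unit,
      ZMod.inv_coe_unit]
  rw [Finset.sum_congr rfl fun ψ _ ↦ hconj ψ, sum_char_inv_mul_char_eq ℂ hy]
  exact if_congr eq_comm rfl rfl

theorem sum_isPrimitive_apply_mul_conj_apply {d : ℕ} [NeZero d] {x y : ℤ}
    (hx : IsUnit (x : ZMod d)) (hy : IsUnit (y : ZMod d)) :
    ∑ χ : DirichletCharacter ℂ d,
        (if χ.IsPrimitive then χ x * starRingEnd ℂ (χ y) else 0)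
      = ∑ k ∈ d.divisors,
          if (x : ZMod k) = y then (k.totient : ℂ) * ((μ (d / k) : ℤ) : ℂ) else 0 := by
  rw [sum_isPrimitive_eq_sum_divisors_moebius_smul]
  refine Finset.sum_congr rfl fun k hk ↦ ?_
  have hkd := Nat.dvd_of_mem_divisors hk
  have : NeZero k := ⟨Nat.ne_of_gt (Nat.pos_of_mem_divisors hk)⟩
  have hyk : IsUnit (y : ZMod k) := by simpa using hy.map (ZMod.castHom hkd (ZMod k))
  simp only [sum_factorsThrough_eq_sum_changeLevel hkd, changeLevel_apply_intCast hkd _ hx,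
    changeLevel_apply_intCast hkd _ hy, sum_apply_mul_conj_apply _ hyk, zsmul_eq_mul]
  split_ifs <;> ring

theorem two_mul_ite_apply_neg_one_eq_neg_one_pow {d : ℕ} (χ : DirichletCharacter ℂ d) (a : ℕ) :
    2 * (if χ (-1) = (-1) ^ a then 1 else 0 : ℂ) = 1 + (-1) ^ a * χ (-1) := by
  rcases χ.even_or_odd with hχ | hχ <;> rcases neg_one_pow_eq_or ℂ a with ha | ha <;>
    rw [hχ, ha] <;> norm_num

end DirichletCharacter

theorem stmt_12_general (d : ℕ) (hd : 1 ≤ d) (a : ℕ) (n m : ℤ)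
    (hn : Int.gcd n d = 1) (hm : Int.gcd m d = 1) :
    2 * ∑ χ : DirichletCharacter ℂ d,
        (if χ.IsPrimitive ∧ χ (-1) = (-1) ^ a
          then χ (n : ZMod d) * (starRingEnd ℂ) (χ (m : ZMod d)) else 0)
      = (∑ k ∈ d.divisors, (if (n : ZMod k) = (m : ZMod k)
            then (Nat.totient k : ℂ) * ((ArithmeticFunction.moebius (d / k) : ℤ) : ℂ)
            else 0))
        + (-1) ^ a * (∑ k ∈ d.divisors, (if (n : ZMod k) = (-(m : ZMod k))
            then (Nat.totient k : ℂ) * ((ArithmeticFunction.moebius (d / k) : ℤ) : ℂ)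
            else 0)) := by
  have : NeZero d := ⟨by omega⟩
  have hnu := ZMod.isUnit_intCast_of_gcd_eq_one hn
  have hmu := ZMod.isUnit_intCast_of_gcd_eq_one hm
  have hparity : ∀ χ : DirichletCharacter ℂ d,
      2 * (if χ.IsPrimitive ∧ χ (-1) = (-1) ^ a then χ n * starRingEnd ℂ (χ m) else 0)
        = (if χ.IsPrimitive then χ n * starRingEnd ℂ (χ m) else 0)
          + (-1) ^ a *
            if χ.IsPrimitive then χ ((-n : ℤ) : ZMod d) * starRingEnd ℂ (χ m) else 0 := by
    intro χ
    have hχn : χ ((-n : ℤ) : ZMod d) = χ (-1) * χ n := by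
      rw [Int.cast_neg, neg_eq_neg_one_mul, map_mul]
    rw [hχn]
    by_cases hχ : χ.IsPrimitive <;> simp only [hχ, true_and, false_and, if_false, if_true]
    · rw [← mul_one (χ n * _), ← mul_ite_zero]
      linear_combination
        (χ n * starRingEnd ℂ (χ m)) * two_mul_ite_apply_neg_one_eq_neg_one_pow χ a
    · ring
  have hneg : ∀ k : ℕ, ((-n : ℤ) : ZMod k) = m ↔ (n : ZMod k) = -(m : ZMod k) := fun k ↦ by
    rw [Int.cast_neg, neg_eq_iff_eq_neg]
  rw [Finset.mul_sum, Finset.sum_congr rfl fun χ _ ↦ hparity χ, Finset.sum_add_distrib,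
    ← Finset.mul_sum, sum_isPrimitive_apply_mul_conj_apply hnu hmu,
    sum_isPrimitive_apply_mul_conj_apply (by rwa [Int.cast_neg, IsUnit.neg_iff]) hmu]
  simp only [hneg]

theorem stmt_12 (d : ℕ) (hd : 1 ≤ d) (a : ℕ) (ha : a ≤ 1) (n m : ℤ)
    (hn : Int.gcd n d = 1) (hm : Int.gcd m d = 1) :
    2 * ∑ χ : DirichletCharacter ℂ d,
        (if χ.IsPrimitive ∧ χ (-1) = (-1) ^ a
          then χ (n : ZMod d) * (starRingEnd ℂ) (χ (m : ZMod d)) else 0)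
      = (∑ k ∈ d.divisors, (if (n : ZMod k) = (m : ZMod k)
            then (Nat.totient k : ℂ) * ((ArithmeticFunction.moebius (d / k) : ℤ) : ℂ)
            else 0))
        + (-1) ^ a * (∑ k ∈ d.divisors, (if (n : ZMod k) = (-(m : ZMod k))
            then (Nat.totient k : ℂ) * ((ArithmeticFunction.moebius (d / k) : ℤ) : ℂ)
            else 0)) :=
  stmt_12_general d hd a n m hn hm
end

section
/- Let $0 < \varepsilon < 1/2$ and let $g : \mathbb{N} \to \mathbb{C}$ satisfy $|g(n)| \leq n^{\varepsilon - 1}$ for all $n \geq 1$. Then there is a constant $C(\varepsilon)$ such that for all real $X \geq 2$: $\sum_{D, D' \geq 1,\ \mathrm{lcm}(D,D') > X} \frac{|g(D)|\,|g(D')|}{\mathrm{lcm}(D, D')} \leq C(\varepsilon)\, X^{2\varepsilon - 1}$. -/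
/-!
Rankin's trick: for `L > X` and `2ε ≤ 1`, `1 / L ≤ X ^ (2ε - 1) * L ^ (-2ε)`, so the tail sum is at most
`X ^ (2ε - 1)` times the full sum of `(D D') ^ (ε - 1) * lcm(D, D') ^ (-2ε)`. Writing `D = e a`, `D' = e b`
with `e = gcd(D, D')`, so that `lcm(D, D') = e a b`, the general term becomes `e⁻² (a b) ^ (-1 - ε)`,
and `(D, D') ↦ (e, a, b)` is injective; the resulting triple sum converges since `ε > 0`.
-/

lemma inv_le_rpow_mul_rpow_neg {X L θ : ℝ} (hX : 0 < X) (hXL : X ≤ L) (hθ : θ ≤ 1) :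
    L⁻¹ ≤ X ^ (θ - 1) * L ^ (-θ) := by
  have hL : 0 < L := hX.trans_le hXL
  calc L⁻¹ = L ^ (θ - 1) * L ^ (-θ) := by
        rw [← Real.rpow_add hL, show θ - 1 + -θ = -1 by ring, Real.rpow_neg_one]
    _ ≤ X ^ (θ - 1) * L ^ (-θ) := by
        gcongr ?_ * _
        exact Real.rpow_le_rpow_of_nonpos hX hXL (by linarith)

lemma mul_rpow_mul_mul_rpow_mul_mul_rpow {e a b : ℝ} (he : 0 < e) (ha : 0 < a) (hb : 0 < b)
    (s t : ℝ) :
    (e * a) ^ s * (e * b) ^ s * (e * a * b) ^ t = e ^ (2 * s + t) * (a ^ (s + t) * b ^ (s + t)) := by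
  simp only [Real.mul_rpow, Real.rpow_add, two_mul, he, ha, hb, he.le, ha.le, hb.le,
    (mul_pos he ha).le]
  ring

lemma tsum_le_mul_tsum_of_le_mul_comp_injective {α β : Type*} {f : α → ℝ} {G : β → ℝ}
    {ι : α → β} (hι : Function.Injective ι) (hf : ∀ a, 0 ≤ f a) (hG : ∀ b, 0 ≤ G b)
    (hGs : Summable G) {c : ℝ} (hc : 0 ≤ c) (hfG : ∀ a, f a ≤ c * G (ι a)) :
    ∑' a, f a ≤ c * ∑' b, G b := by
  have hGι : Summable (G ∘ ι) := hGs.comp_injective hι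
  have hcGι : Summable fun a => c * G (ι a) := hGι.mul_left c
  calc ∑' a, f a ≤ ∑' a, c * G (ι a) :=
        (hcGι.of_nonneg_of_le hf hfG).tsum_le_tsum hfG hcGι
    _ = c * ∑' a, (G ∘ ι) a := tsum_mul_left
    _ ≤ c * ∑' b, G b := by gcongr; exact tsum_comp_le_tsum_of_inj hGs hG hι

def gcdCofactors (p : ℕ × ℕ) : ℕ × ℕ × ℕ :=
  (p.1.gcd p.2, p.1 / p.1.gcd p.2, p.2 / p.1.gcd p.2)

lemma gcdCofactors_injective : Function.Injective gcdCofactors := by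
  rintro ⟨m, n⟩ ⟨m', n'⟩ h
  simp only [gcdCofactors, Prod.mk.injEq] at h
  obtain ⟨hg, hm, hn⟩ := h
  refine Prod.ext ?_ ?_
  · calc m = m.gcd n * (m / m.gcd n) := (Nat.mul_div_cancel' (Nat.gcd_dvd_left m n)).symm
      _ = m'.gcd n' * (m' / m'.gcd n') := by rw [hm, hg]
      _ = m' := Nat.mul_div_cancel' (Nat.gcd_dvd_left m' n')
  · calc n = m.gcd n * (n / m.gcd n) := (Nat.mul_div_cancel' (Nat.gcd_dvd_right m n)).symm
      _ = m'.gcd n' * (n' / m'.gcd n') := by rw [hn, hg]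
      _ = n' := Nat.mul_div_cancel' (Nat.gcd_dvd_right m' n')

lemma lcm_eq_gcd_mul_div_gcd_mul_div_gcd (m n : ℕ) :
    m.lcm n = m.gcd n * (m / m.gcd n) * (n / m.gcd n) := by
  rcases (m.gcd n).eq_zero_or_pos with h | h
  · simp [Nat.gcd_eq_zero_iff.mp h]
  · apply Nat.eq_of_mul_eq_mul_left h
    calc m.gcd n * m.lcm n = m.gcd n * (m / m.gcd n) * (m.gcd n * (n / m.gcd n)) := by
          rw [Nat.gcd_mul_lcm, Nat.mul_div_cancel' (Nat.gcd_dvd_left m n),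
            Nat.mul_div_cancel' (Nat.gcd_dvd_right m n)]
      _ = _ := by ring

noncomputable def tripleWeight (ε : ℝ) (t : ℕ × ℕ × ℕ) : ℝ :=
  (t.1 : ℝ) ^ (-2 : ℝ) * ((t.2.1 : ℝ) ^ (-(1 + ε)) * (t.2.2 : ℝ) ^ (-(1 + ε)))

lemma tripleWeight_nonneg (ε : ℝ) (t : ℕ × ℕ × ℕ) : 0 ≤ tripleWeight ε t := by
  unfold tripleWeight; positivity

lemma summable_tripleWeight {ε : ℝ} (hε : 0 < ε) : Summable (tripleWeight ε) := by
  have h2 : Summable (fun n : ℕ => (n : ℝ) ^ (-2 : ℝ)) := Real.summable_nat_rpow.mpr (by norm_num)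
  have h1 : Summable (fun n : ℕ => (n : ℝ) ^ (-(1 + ε))) := Real.summable_nat_rpow.mpr (by linarith)
  exact h2.mul_of_nonneg (h1.mul_of_nonneg h1 (fun _ => by positivity) (fun _ => by positivity))
    (fun _ => by positivity) (fun _ => by positivity)

lemma norm_mul_norm_div_lcm_le {E : Type*} [SeminormedAddGroup E] {ε : ℝ} (hε : ε ≤ 1 / 2)
    {g : ℕ → E} (hg : ∀ n : ℕ, 1 ≤ n → ‖g n‖ ≤ (n : ℝ) ^ (ε - 1)) {X : ℝ} (hX : 0 < X)
    {m n : ℕ} (hm : 0 < m) (hn : 0 < n) (hXL : X < m.lcm n) :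
    ‖g m‖ * ‖g n‖ / (m.lcm n : ℝ) ≤ X ^ (2 * ε - 1) * tripleWeight ε (gcdCofactors (m, n)) := by
  set e := m.gcd n
  have he : 0 < e := Nat.gcd_pos_of_pos_left n hm
  have ha : 0 < m / e := Nat.div_pos (Nat.gcd_le_left n hm) he
  have hb : 0 < n / e := Nat.div_pos (Nat.gcd_le_right (m := m) hn) he
  have hme : (m : ℝ) = e * (m / e : ℕ) := by
    exact_mod_cast (Nat.mul_div_cancel' (Nat.gcd_dvd_left m n)).symm
  have hne : (n : ℝ) = e * (n / e : ℕ) := by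
    exact_mod_cast (Nat.mul_div_cancel' (Nat.gcd_dvd_right m n)).symm
  have hL : (m.lcm n : ℝ) = e * (m / e : ℕ) * (n / e : ℕ) := by
    exact_mod_cast lcm_eq_gcd_mul_div_gcd_mul_div_gcd m n
  calc ‖g m‖ * ‖g n‖ / (m.lcm n : ℝ) = ‖g m‖ * ‖g n‖ * (m.lcm n : ℝ)⁻¹ := div_eq_mul_inv _ _
    _ ≤ (m : ℝ) ^ (ε - 1) * (n : ℝ) ^ (ε - 1) * (X ^ (2 * ε - 1) * (m.lcm n : ℝ) ^ (-(2 * ε))) := by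
        gcongr
        · exact hg m hm
        · exact hg n hn
        · exact inv_le_rpow_mul_rpow_neg hX hXL.le (by linarith)
    _ = X ^ (2 * ε - 1) * ((e * (m / e : ℕ) : ℝ) ^ (ε - 1) * (e * (n / e : ℕ) : ℝ) ^ (ε - 1) *
          (e * (m / e : ℕ) * (n / e : ℕ) : ℝ) ^ (-(2 * ε))) := by
        rw [← hL, ← hme, ← hne]; ring
    _ = X ^ (2 * ε - 1) * tripleWeight ε (gcdCofactors (m, n)) := by
        rw [mul_rpow_mul_mul_rpow_mul_mul_rpow (by positivity) (by positivity) (by positivity),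
          show 2 * (ε - 1) + -(2 * ε) = -2 by ring, show ε - 1 + -(2 * ε) = -(1 + ε) by ring]
        rfl

theorem stmt_14 (ε : ℝ) (hε1 : 0 < ε) (hε2 : ε < 1 / 2) (g : ℕ → ℂ)
    (hg : ∀ n : ℕ, 1 ≤ n → ‖g n‖ ≤ (n : ℝ) ^ (ε - 1)) :
    ∃ C : ℝ, ∀ X : ℝ, 2 ≤ X →
      ∑' p : {p : ℕ × ℕ // 0 < p.1 ∧ 0 < p.2 ∧ X < Nat.lcm p.1 p.2},
          ‖g (p : ℕ × ℕ).1‖ * ‖g (p : ℕ × ℕ).2‖ /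
            (Nat.lcm (p : ℕ × ℕ).1 (p : ℕ × ℕ).2 : ℝ)
        ≤ C * X ^ (2 * ε - 1) := by
  refine ⟨∑' t, tripleWeight ε t, fun X hX => ?_⟩
  have hX0 : 0 < X := by linarith
  rw [mul_comm]
  exact tsum_le_mul_tsum_of_le_mul_comp_injective
    (gcdCofactors_injective.comp Subtype.val_injective) (fun _ => by positivity)
    (tripleWeight_nonneg ε) (summable_tripleWeight hε1) (by positivity)
    fun p => norm_mul_norm_div_lcm_le hε2.le hg hX0 p.2.1 p.2.2.1 p.2.2.2
end
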